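/- For all n ≥ 1 and X_1,...,X_n ∈ A, the free cumulant κ_n satisfies κ_n(X_1,...,X_n) = Σ_{π ∈ [1_n]} t_π[X_1,...,X_n], where the sum ranges over all connected non-crossing linked partitions of {1,...,n} and t_π[X_1,...,X_n] = Π_{blocks B=(i_1,...,i_l) of π} t_{l−1}(X_{i_1},...,X_{i_l}) · Π_{k ∈ s(π)} t_0(X_k). -/

import Mathlib

open scoped Classical


/-- Two blocks `B`, `C` cross: there are `i < k < p < q` with `i, p ∈ B` and `k, q ∈ C`. -/
def Crosses {n : ℕ} (B C : Finset (Fin n)) : Prop :=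
  ∃ i k p q : Fin n, i < k ∧ k < p ∧ p < q ∧ i ∈ B ∧ p ∈ B ∧ k ∈ C ∧ q ∈ C

/-- `π` is a non-crossing linked partition of `{1, …, n}` (encoded as `Fin n`):
its (nonempty) blocks cover `Fin n`, are pairwise non-crossing, any two distinct blocks
intersect in at most one element, and if two distinct blocks intersect in `{j}` then both
blocks have at least two elements and `j` is the minimal element of exactly one of them. -/
def IsNCL (n : ℕ) (π : Finset (Finset (Fin n))) : Prop :=
  (∀ B ∈ π, B.Nonempty) ∧
  (∀ x : Fin n, ∃ B ∈ π, x ∈ B) ∧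
  (∀ B ∈ π, ∀ C ∈ π, B ≠ C → ¬ Crosses B C) ∧
  (∀ B ∈ π, ∀ C ∈ π, B ≠ C → (B ∩ C).card ≤ 1 ∧
    ∀ j : Fin n, B ∩ C = {j} →
      2 ≤ B.card ∧ 2 ≤ C.card ∧
        Xor' (B.min = (j : WithBot (Fin n))) (C.min = (j : WithBot (Fin n))))

/-- `π` is a non-crossing partition: a non-crossing linked partition with pairwise
disjoint blocks. -/
def IsNC (n : ℕ) (π : Finset (Finset (Fin n))) : Prop :=
  IsNCL n π ∧ ∀ B ∈ π, ∀ C ∈ π, B ≠ C → Disjoint B C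

/-- `Refines n σ π` (i.e. `σ ⪯ π`): every block of `π` is a union of blocks of `σ`. -/
def Refines (n : ℕ) (σ π : Finset (Finset (Fin n))) : Prop :=
  ∀ B ∈ π, ∃ S : Finset (Finset (Fin n)), S ⊆ σ ∧ B = S.sup id

/-- `a` and `b` lie in a common block of `π`. -/
def Linked {n : ℕ} (π : Finset (Finset (Fin n))) (a b : Fin n) : Prop :=
  ∃ B ∈ π, a ∈ B ∧ b ∈ B

/-- `a` and `b` are connected in `π`: joined by a chain of pairwise intersecting blocks. -/
def Connected {n : ℕ} (π : Finset (Finset (Fin n))) (a b : Fin n) : Prop :=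
  Relation.ReflTransGen (Linked π) a b

/-- The partition `c(π)` of `Fin n` into the connected components of `π`. -/
noncomputable def cPart (n : ℕ) (π : Finset (Finset (Fin n))) : Finset (Finset (Fin n)) :=
  Finset.univ.image fun i => Finset.univ.filter (Connected π i)

/-- Embedding of the unbarred copy: `i ↦ 2 i` in the interleaved order
`1, 1̄, 2, 2̄, …, n, n̄`. -/
def ueEmb (n : ℕ) (i : Fin n) : Fin (2 * n) := ⟨2 * i.1, by have := i.isLt; omega⟩

/-- Embedding of the barred copy: `i ↦ 2 i + 1` in the interleaved order. -/
def beEmb (n : ℕ) (i : Fin n) : Fin (2 * n) := ⟨2 * i.1 + 1, by have := i.isLt; omega⟩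

/-- The union `γ ∪ γ'` inside the interleaved ordered set `1, 1̄, 2, 2̄, …, n, n̄`. -/
def interleave (n : ℕ) (γ γ' : Finset (Finset (Fin n))) : Finset (Finset (Fin (2 * n))) :=
  γ.image (Finset.image (ueEmb n)) ∪ γ'.image (Finset.image (beEmb n))

/-- `γ'` is the Kreweras complement of `γ`: the largest non-crossing partition (in the
refinement order) such that `γ ∪ γ'` is non-crossing in the interleaved order. -/
def IsKr (n : ℕ) (γ γ' : Finset (Finset (Fin n))) : Prop :=
  IsNC n γ' ∧ IsNC (2 * n) (interleave n γ γ') ∧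
  ∀ τ, IsNC n τ → IsNC (2 * n) (interleave n γ τ) → Refines n τ γ'

/-- `B` is an exterior block of `γ`: no other block `D` of `γ` contains elements `l, s`
with `l = min B`, or `l < min B` and `max B < s`. -/
def IsExteriorIn (n : ℕ) (γ : Finset (Finset (Fin n))) (B : Finset (Fin n)) : Prop :=
  B ∈ γ ∧ ∀ D ∈ γ, D ≠ B → ∀ l ∈ D, ∀ s ∈ D,
    ¬((l ∈ B ∧ ∀ b ∈ B, l ≤ b) ∨ (∀ b ∈ B, l < b ∧ b < s))

/-- Halving map `Fin (2n) → Fin n`. -/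
def halfEmb (n : ℕ) (i : Fin (2 * n)) : Fin n := ⟨i.1 / 2, by have := i.isLt; omega⟩

/-- `γ₋`: the restriction of `γ ∈ NC(2n)` to the odd elements `{1, 3, …, 2n − 1}`
(indices `≡ 0 mod 2` in the `0`-based encoding), identified with a partition of `Fin n`. -/
noncomputable def minusPart (n : ℕ) (γ : Finset (Finset (Fin (2 * n)))) :
    Finset (Finset (Fin n)) :=
  (γ.filter fun B => ∀ i ∈ B, i.1 % 2 = 0).image (Finset.image (halfEmb n))

/-- `γ₊`: the restriction of `γ ∈ NC(2n)` to the even elements `{2, 4, …, 2n}`,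
identified with a partition of `Fin n`. -/
noncomputable def plusPart (n : ℕ) (γ : Finset (Finset (Fin (2 * n)))) :
    Finset (Finset (Fin n)) :=
  (γ.filter fun B => ∀ i ∈ B, i.1 % 2 = 1).image (Finset.image (halfEmb n))

/-- `γ ∈ NC_s(2n)`: a non-crossing partition of `{1, …, 2n}` all of whose blocks have
elements of constant parity, with `γ₊ = Kr(γ₋)`. -/
def NCs (n : ℕ) (γ : Finset (Finset (Fin (2 * n)))) : Prop :=
  IsNC (2 * n) γ ∧
  (∀ B ∈ γ, (∀ i ∈ B, i.1 % 2 = 0) ∨ (∀ i ∈ B, i.1 % 2 = 1)) ∧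
  IsKr n (minusPart n γ) (plusPart n γ)

/-- The restriction of `γ` to a subset `S`. -/
noncomputable def restrictTo (n : ℕ) (γ : Finset (Finset (Fin n))) (S : Finset (Fin n)) :
    Finset (Finset (Fin n)) :=
  (γ.image fun B => B ∩ S).filter Finset.Nonempty

/-- A planar rooted tree: a root together with a linearly ordered (left to right) list of
subtrees. -/
inductive PTree where
  | node : List PTree → PTree

mutual
/-- Number of vertices of a planar rooted tree. -/
def PTree.size : PTree → ℕ
  | .node ts => 1 + sizeList ts
def sizeList : List PTree → ℕ
  | [] => 0
  | t :: ts => PTree.size t + sizeList ts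
end

/-- Depth-first indices of the roots of a list of trees, the first root getting index `k`. -/
def childRoots : List PTree → ℕ → List ℕ
  | [], _ => []
  | t :: ts, k => k :: childRoots ts (k + PTree.size t)

mutual
/-- The blocks of the constituent elementary trees (a root together with its offsprings,
provided there is at least one offspring) of a planar tree, with vertices numbered in
depth-first (left-first) order starting at `k`. -/
def PTree.blk : PTree → ℕ → List (List ℕ)
  | .node ts, k =>
      (if ts.isEmpty then [] else [k :: childRoots ts (k + 1)]) ++ blkList ts (k + 1)
def blkList : List PTree → ℕ → List (List ℕ)
  | [], _ => []
  | t :: ts, k => PTree.blk t k ++ blkList ts (k + PTree.size t)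
end

/-- The blocks of the elementary trees constituting a planar tree, in depth-first
numbering starting at `0`; a single vertex is itself an elementary tree. -/
def treeBlocks : PTree → List (List ℕ)
  | .node [] => [[0]]
  | t => t.blk 0

/-- Convert a list of (`0`-based) vertex numbers into a block of `Fin n`. -/
def listToBlock (n : ℕ) (l : List ℕ) : Finset (Fin n) :=
  (l.filterMap fun i => if h : i < n then some (⟨i, h⟩ : Fin n) else none).toFinset

mutual
/-- Evaluation of a planar rooted tree: the product over its vertices of `f k`, where `k`
is the number of offsprings of the vertex (so an elementary tree with `m` vertices
contributes `f (m − 1)`). -/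
def PTree.eval (f : ℕ → ℂ) : PTree → ℂ
  | .node ts => f ts.length * evalList f ts
def evalList (f : ℕ → ℂ) : List PTree → ℂ
  | [] => 1
  | t :: ts => PTree.eval f t * evalList f ts
end

/-- A bicolor planar rooted tree: each subtree carries a color (`true` = color 1,
`false` = color 0). -/
inductive BTree where
  | node : List (Bool × BTree) → BTree

mutual
/-- Number of vertices of a bicolor planar tree. -/
def BTree.size : BTree → ℕ
  | .node ts => 1 + bsizeList ts
def bsizeList : List (Bool × BTree) → ℕ
  | [] => 0
  | (_, t) :: ts => BTree.size t + bsizeList ts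
end

mutual
/-- Validity of a bicolor planar tree: at every vertex, the offsprings of color 1 precede
the offsprings of color 0. -/
def BTree.Valid : BTree → Prop
  | .node ts => List.Chain' (fun a b => b ≤ a) (ts.map Prod.fst) ∧ bvalidList ts
def bvalidList : List (Bool × BTree) → Prop
  | [] => True
  | (_, t) :: ts => BTree.Valid t ∧ bvalidList ts
end

/-- A bicolor tree is elementary when all offsprings of the root are leaves. -/
def BTree.IsElementary : BTree → Prop
  | .node ts => ∀ p ∈ ts, p.2 = BTree.node []
/-- The term `t_π[X_1, …, X_n]`: the product over blocks `B = (i_1 < … < i_l)` of `π` of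
`t_{l−1}(X_{i_1}, …, X_{i_l})`, times the product over `k ∈ s(π)` (the elements that are
not the minimal element of any block) of `t_0(X_k)`. Here `t m` stands for `t_{m−1}`,
taking `m` arguments. -/
noncomputable def tTerm {A : Type*} [Ring A] (t : ∀ m : ℕ, (Fin m → A) → ℂ)
    (n : ℕ) (π : Finset (Finset (Fin n))) (X : Fin n → A) : ℂ :=
  (∏ B ∈ π, t B.card fun j => X (B.orderIsoOfFin rfl j).1) *
  ∏ k ∈ Finset.univ.filter
      (fun k : Fin n => ∀ B ∈ π, B.min ≠ (k : WithBot (Fin n))),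
    t 1 fun _ => X k

/-- The family `t` satisfies the defining recurrence of the `t`-coefficients:
`φ(X_1 ⋯ X_n) = Σ_{π ∈ NCL(n)} t_π[X_1, …, X_n]`. -/
def TRec {A : Type*} [Ring A] [Algebra ℂ A] (φ : A →ₗ[ℂ] ℂ)
    (t : ∀ m : ℕ, (Fin m → A) → ℂ) : Prop :=
  ∀ (n : ℕ) (X : Fin (n + 1) → A),
    φ (List.ofFn X).prod =
      ∑ π ∈ Finset.univ.filter (fun π => IsNCL (n + 1) π), tTerm t (n + 1) π X

/-- The term `κ_γ[X_1, …, X_n]`: the product over blocks `B = (i_1 < … < i_l)` of `γ` of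
`κ_l(X_{i_1}, …, X_{i_l})`. -/
noncomputable def cumTerm {A : Type*} [Ring A] (κ : ∀ m : ℕ, (Fin m → A) → ℂ)
    (n : ℕ) (γ : Finset (Finset (Fin n))) (X : Fin n → A) : ℂ :=
  ∏ B ∈ γ, κ B.card fun j => X (B.orderIsoOfFin rfl j).1

/-- The family `κ` satisfies the moment–cumulant recurrence
`φ(X_1 ⋯ X_n) = Σ_{γ ∈ NC(n)} κ_γ[X_1, …, X_n]` defining the free cumulants. -/
def CumRec {A : Type*} [Ring A] [Algebra ℂ A] (φ : A →ₗ[ℂ] ℂ)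
    (κ : ∀ m : ℕ, (Fin m → A) → ℂ) : Prop :=
  ∀ (n : ℕ) (X : Fin (n + 1) → A),
    φ (List.ofFn X).prod =
      ∑ γ ∈ Finset.univ.filter (fun γ => IsNC (n + 1) γ), cumTerm κ (n + 1) γ X

/-- Free independence of a family of unital subalgebras: alternating products of centered
elements have vanishing expectation. -/
def FreeFamily {A : Type*} [Ring A] [Algebra ℂ A] (φ : A →ₗ[ℂ] ℂ) {I : Type*}
    (S : I → Subalgebra ℂ A) : Prop :=
  ∀ (n : ℕ) (a : Fin (n + 1) → A) (idx : Fin (n + 1) → I),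
    (∀ k, a k ∈ S (idx k)) → (∀ k, φ (a k) = 0) →
    (∀ k : Fin n, idx k.castSucc ≠ idx k.succ) →
    φ (List.ofFn a).prod = 0

/-- Two elements are free if the unital subalgebras they generate are free. -/
def FreePair {A : Type*} [Ring A] [Algebra ℂ A] (φ : A →ₗ[ℂ] ℂ) (X Y : A) : Prop :=
  FreeFamily φ fun b : Bool =>
    if b = true then Algebra.adjoin ℂ {X} else Algebra.adjoin ℂ {Y}

/-!
A non-crossing linked partition `π` is cut by its connected components into a non-crossing
partition `γ = c(π)` together with, on each block of `γ`, a connected non-crossing linked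
partition; conversely any such family glues back, and `t_π` is the product of the pieces.
Hence the `t`-expansion of `φ(X_1 ⋯ X_n)` is the moment–cumulant expansion in which `κ_l` is
replaced by the sum of `t_σ` over connected `σ`. Both families satisfy the moment–cumulant
recurrence, which determines the cumulants by induction on `n` (the one-block partition is
the only term of top order).
-/

open Finset

/-- `s.min` lives in `WithTop α`; the `WithBot` coercion, which is definitionally the same,
is the one `IsNCL` uses. -/
lemma Finset.min_eq_coe_iff {α : Type*} [LinearOrder α] {s : Finset α} {a : α} :
    s.min = (a : WithBot α) ↔ a ∈ s ∧ ∀ b ∈ s, a ≤ b := by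
  change s.min = (a : WithTop α) ↔ _
  refine ⟨fun h => ⟨mem_of_min h, fun b hb => WithTop.coe_le_coe.1 (h ▸ min_le hb)⟩,
    fun ⟨ha, hle⟩ => le_antisymm (min_le ha)
      (Finset.le_min fun b hb => WithTop.coe_le_coe.2 (hle b hb))⟩

section Compatible

variable {m n : ℕ}

def NCLCompatible (B C : Finset (Fin n)) : Prop :=
  ¬ Crosses B C ∧ (B ∩ C).card ≤ 1 ∧
    ∀ j : Fin n, B ∩ C = {j} →
      2 ≤ B.card ∧ 2 ≤ C.card ∧
        Xor (B.min = (j : WithBot (Fin n))) (C.min = (j : WithBot (Fin n)))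

lemma isNCL_iff {π : Finset (Finset (Fin n))} :
    IsNCL n π ↔ (∀ B ∈ π, B.Nonempty) ∧ (∀ x : Fin n, ∃ B ∈ π, x ∈ B) ∧
      ∀ B ∈ π, ∀ C ∈ π, B ≠ C → NCLCompatible B C := by
  simp only [IsNCL, NCLCompatible, imp_and, forall_and]
  rfl

lemma Crosses.mono {B C B' C' : Finset (Fin n)} (h : Crosses B C) (hB : B ⊆ B')
    (hC : C ⊆ C') : Crosses B' C' := by
  obtain ⟨i, k, p, q, hik, hkp, hpq, hi, hp, hk, hq⟩ := h
  exact ⟨i, k, p, q, hik, hkp, hpq, hB hi, hB hp, hC hk, hC hq⟩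

lemma nclCompatible_of_disjoint {B C : Finset (Fin n)} (hdisj : Disjoint B C)
    (hcross : ¬ Crosses B C) : NCLCompatible B C := by
  have hBC : B ∩ C = ∅ := disjoint_iff_inter_eq_empty.1 hdisj
  refine ⟨hcross, by simp [hBC], fun j hj => ?_⟩
  simp [hBC] at hj

variable (e : Fin m ↪o Fin n)

lemma crosses_map_iff {B C : Finset (Fin m)} :
    Crosses (B.map e.toEmbedding) (C.map e.toEmbedding) ↔ Crosses B C := by
  constructor
  · rintro ⟨i, k, p, q, hik, hkp, hpq, hi, hp, hk, hq⟩
    simp only [mem_map, RelEmbedding.coe_toEmbedding] at hi hp hk hq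
    obtain ⟨i, hi, rfl⟩ := hi
    obtain ⟨p, hp, rfl⟩ := hp
    obtain ⟨k, hk, rfl⟩ := hk
    obtain ⟨q, hq, rfl⟩ := hq
    exact ⟨i, k, p, q, e.lt_iff_lt.1 hik, e.lt_iff_lt.1 hkp, e.lt_iff_lt.1 hpq, hi, hp, hk, hq⟩
  · rintro ⟨i, k, p, q, hik, hkp, hpq, hi, hp, hk, hq⟩
    exact ⟨e i, e k, e p, e q, e.lt_iff_lt.2 hik, e.lt_iff_lt.2 hkp, e.lt_iff_lt.2 hpq,
      mem_map_of_mem _ hi, mem_map_of_mem _ hp, mem_map_of_mem _ hk, mem_map_of_mem _ hq⟩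

lemma min_map_eq_coe_iff {B : Finset (Fin m)} {j : Fin m} :
    (B.map e.toEmbedding).min = (e j : WithBot (Fin n)) ↔ B.min = (j : WithBot (Fin m)) := by
  simp only [Finset.min_eq_coe_iff, mem_map, RelEmbedding.coe_toEmbedding, forall_exists_index,
    and_imp, forall_apply_eq_imp_iff₂, e.le_iff_le, e.injective.eq_iff, exists_eq_right]

lemma nclCompatible_map_iff {B C : Finset (Fin m)} :
    NCLCompatible (B.map e.toEmbedding) (C.map e.toEmbedding) ↔ NCLCompatible B C := by
  have hinter : B.map e.toEmbedding ∩ C.map e.toEmbedding = (B ∩ C).map e.toEmbedding :=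
    (map_inter B C).symm
  simp only [NCLCompatible, crosses_map_iff, hinter, card_map]
  refine and_congr_right fun _ => and_congr_right fun _ => ⟨fun h j hj => ?_, fun h j hj => ?_⟩
  · simpa only [min_map_eq_coe_iff] using h (e j) (by simp [hj])
  · obtain ⟨i, -, rfl⟩ := mem_map.1 (hj ▸ mem_singleton_self j)
    have hi : B ∩ C = {i} := map_injective e.toEmbedding (by simpa using hj)
    simpa only [RelEmbedding.coe_toEmbedding, min_map_eq_coe_iff] using h i hi

end Compatible

section Components

variable {n : ℕ} {π : Finset (Finset (Fin n))}

lemma Linked.symm {a b : Fin n} (h : Linked π a b) : Linked π b a := by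
  obtain ⟨B, hB, ha, hb⟩ := h
  exact ⟨B, hB, hb, ha⟩

lemma Linked.connected {a b : Fin n} (h : Linked π a b) : Connected π a b :=
  .single h

lemma Connected.trans {a b c : Fin n} (h : Connected π a b) (h' : Connected π b c) :
    Connected π a c :=
  Relation.ReflTransGen.trans h h'

lemma Connected.symm {a b : Fin n} (h : Connected π a b) : Connected π b a := by
  induction h with
  | refl => exact .refl
  | tail _ hbc ih => exact .head hbc.symm ih

noncomputable def component (π : Finset (Finset (Fin n))) (i : Fin n) : Finset (Fin n) :=
  univ.filter (Connected π i)

lemma mem_component {i j : Fin n} : j ∈ component π i ↔ Connected π i j := by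
  simp [component]

lemma mem_component_self (i : Fin n) : i ∈ component π i :=
  mem_component.2 .refl

lemma component_eq_of_connected {i j : Fin n} (h : Connected π i j) :
    component π i = component π j := by
  ext x
  simp only [mem_component]
  exact ⟨h.symm.trans, h.trans⟩

lemma component_eq_of_mem {i j : Fin n} (h : j ∈ component π i) :
    component π j = component π i :=
  (component_eq_of_connected (mem_component.1 h)).symm

lemma mem_cPart {C : Finset (Fin n)} : C ∈ cPart n π ↔ ∃ i, component π i = C := by
  simp [cPart, component]

lemma component_mem_cPart (i : Fin n) : component π i ∈ cPart n π :=
  mem_cPart.2 ⟨i, rfl⟩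

lemma subset_component {C : Finset (Fin n)} (hC : C ∈ π) {c : Fin n} (hc : c ∈ C) :
    C ⊆ component π c :=
  fun _ hx => mem_component.2 (Linked.connected ⟨C, hC, hc, hx⟩)

lemma subset_of_mem_cPart {B C : Finset (Fin n)} (hB : B ∈ cPart n π) (hC : C ∈ π)
    {c : Fin n} (hc : c ∈ C) (hcB : c ∈ B) : C ⊆ B := by
  obtain ⟨i, rfl⟩ := mem_cPart.1 hB
  exact component_eq_of_mem hcB ▸ subset_component hC hc

lemma cPart_eq_singleton_univ_iff {m : ℕ} [NeZero m] {σ : Finset (Finset (Fin m))} :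
    cPart m σ = {univ} ↔ ∀ i j : Fin m, Connected σ i j := by
  constructor
  · intro h i j
    have hi : component σ i ∈ cPart m σ := component_mem_cPart i
    rw [h, mem_singleton] at hi
    exact mem_component.1 (hi ▸ mem_univ j)
  · intro h
    have hconst : (fun i => univ.filter (Connected σ i)) = fun _ => univ :=
      funext fun i => eq_univ_of_forall fun j => mem_filter.2 ⟨mem_univ j, h i j⟩
    rw [cPart, hconst]
    exact image_const univ_nonempty _

lemma exists_block_straddling {a b : Fin n} (hab : ¬ Connected π a b) (hlt : a < b)
    {c : Fin n} (hac : Connected π a c) (hbc : b < c) :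
    ∃ B ∈ π, ∃ u ∈ B, ∃ v ∈ B, Connected π a u ∧ u < b ∧ b < v := by
  induction hac with
  | refl => exact absurd (hlt.trans hbc) (lt_irrefl a)
  | @tail x c hax hxc ih =>
    rcases lt_trichotomy x b with hxb | rfl | hbx
    · obtain ⟨B, hB, hxB, hcB⟩ := hxc
      exact ⟨B, hB, x, hxB, c, hcB, hax, hxb, hbc⟩
    · exact absurd hax hab
    · exact ih hbx

/-- Each step of a chain starting at `b` uses a block disjoint from `B`, which cannot cross `B`. -/
lemma IsNCL.lt_and_lt_of_connected (hπ : IsNCL n π) {B : Finset (Fin n)} (hB : B ∈ π)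
    {u v b : Fin n} (hu : u ∈ B) (hv : v ∈ B) (hub : ¬ Connected π u b) (hlt : u < b)
    (hgt : b < v) {w : Fin n} (hbw : Connected π b w) : u < w ∧ w < v := by
  induction hbw with
  | refl => exact ⟨hlt, hgt⟩
  | @tail x w hbx hxw ih =>
    obtain ⟨hux, hxv⟩ := ih
    obtain ⟨C, hC, hxC, hwC⟩ := hxw
    have hCB : ∀ s ∈ C, s ∉ B := fun s hsC hsB =>
      hub (Connected.symm ((hbx.trans (Linked.connected ⟨C, hC, hxC, hsC⟩)).trans
        (Linked.connected ⟨B, hB, hsB, hu⟩)))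
    have hne : B ≠ C := fun h => hCB x hxC (h ▸ hxC)
    have hw_ne : ∀ s ∈ B, w ≠ s := fun s hs h => hCB w hwC (h ▸ hs)
    constructor
    · by_contra! hwu
      exact hπ.2.2.1 C hC B hB hne.symm
        ⟨w, u, x, v, lt_of_le_of_ne hwu (hw_ne u hu), hux, hxv, hwC, hxC, hu, hv⟩
    · by_contra! hvw
      exact hπ.2.2.1 B hB C hC hne
        ⟨u, x, v, w, hux, hxv, lt_of_le_of_ne hvw (hw_ne v hv).symm, hu, hv, hxC, hwC⟩

theorem IsNCL.isNC_cPart (hπ : IsNCL n π) : IsNC n (cPart n π) := by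
  have hdisj : ∀ B ∈ cPart n π, ∀ C ∈ cPart n π, B ≠ C → Disjoint B C := by
    rintro _ hB _ hC hne
    obtain ⟨i, rfl⟩ := mem_cPart.1 hB
    obtain ⟨j, rfl⟩ := mem_cPart.1 hC
    refine disjoint_left.2 fun z hzi hzj => hne ?_
    rw [← component_eq_of_mem hzi, ← component_eq_of_mem hzj]
  have hcross : ∀ B ∈ cPart n π, ∀ C ∈ cPart n π, B ≠ C → ¬ Crosses B C := by
    rintro _ hB _ hC hne ⟨a, k, p, q, hak, hkp, hpq, haB, hpB, hkC, hqC⟩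
    obtain ⟨i, rfl⟩ := mem_cPart.1 hB
    obtain ⟨j, rfl⟩ := mem_cPart.1 hC
    rw [mem_component] at haB hpB hkC hqC
    have hap : Connected π a p := haB.symm.trans hpB
    have hkq : Connected π k q := hkC.symm.trans hqC
    have hnak : ¬ Connected π a k := fun h => hne <| by
      rw [component_eq_of_connected haB, component_eq_of_connected h,
        component_eq_of_connected hkC]
    have hnkp : ¬ Connected π k p := fun h => hnak (hap.trans h.symm)
    -- Blocks `{u, v}` jumping over `k` and `{u', v'}` jumping over `p` would each have to
    -- enclose the other.
    obtain ⟨B', hB', u, hu, v, hv, hau, huk, hkv⟩ := exists_block_straddling hnak hak hap hkp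
    obtain ⟨C', hC', u', hu', v', hv', hku', hu'p, hpv'⟩ :=
      exists_block_straddling hnkp hkp hkq hpq
    have hu'_in : u < u' := (hπ.lt_and_lt_of_connected hB' hu hv
      (fun h => hnak (hau.trans h)) huk hkv hku').1
    have hu_in : u' < u := (hπ.lt_and_lt_of_connected hC' hu' hv'
      (fun h => hnkp (hku'.trans h)) hu'p hpv' (hap.symm.trans hau)).1
    exact lt_asymm hu'_in hu_in
  refine ⟨isNCL_iff.2 ⟨?_, fun x => ⟨_, component_mem_cPart x, mem_component_self x⟩,
    fun B hB C hC hne => nclCompatible_of_disjoint (hdisj B hB C hC hne)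
      (hcross B hB C hC hne)⟩, hdisj⟩
  intro B hB
  obtain ⟨i, rfl⟩ := mem_cPart.1 hB
  exact ⟨i, mem_component_self i⟩

end Components

section Transport

lemma Finset.orderEmbOfFin_map {α β : Type*} [LinearOrder α] [LinearOrder β] (e : α ↪o β)
    (s : Finset α) (j : Fin s.card) :
    (s.map e.toEmbedding).orderEmbOfFin (card_map _) j = e (s.orderEmbOfFin rfl j) := by
  refine (congrFun (orderEmbOfFin_unique (card_map _) (fun j => ?_)
    (e.strictMono.comp (s.orderEmbOfFin rfl).strictMono)) j).symm
  exact mem_map_of_mem _ (orderEmbOfFin_mem s rfl j)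

lemma Finset.apply_card_orderEmbOfFin {α A R : Type*} [LinearOrder α]
    (G : ∀ m : ℕ, (Fin m → A) → R) (X : α → A) (s : Finset α) {k : ℕ}
    (h : s.card = k) :
    G s.card (fun j => X (s.orderEmbOfFin rfl j)) = G k (fun j => X (s.orderEmbOfFin h j)) := by
  subst h
  rfl

variable {m n : ℕ}

noncomputable def mapPart (e : Fin m ↪o Fin n) (σ : Finset (Finset (Fin m))) :
    Finset (Finset (Fin n)) :=
  σ.map (mapEmbedding e.toEmbedding).toEmbedding

lemma mem_mapPart {e : Fin m ↪o Fin n} {σ : Finset (Finset (Fin m))} {C : Finset (Fin n)} :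
    C ∈ mapPart e σ ↔ ∃ s ∈ σ, s.map e.toEmbedding = C := by
  simp [mapPart]

lemma prod_mapPart {A R : Type*} [CommMonoid R] (G : ∀ m : ℕ, (Fin m → A) → R)
    (e : Fin m ↪o Fin n) (σ : Finset (Finset (Fin m))) (X : Fin n → A) :
    ∏ C ∈ mapPart e σ, G C.card (fun j => X (C.orderEmbOfFin rfl j)) =
      ∏ s ∈ σ, G s.card (fun j => X (e (s.orderEmbOfFin rfl j))) := by
  rw [mapPart, prod_map]
  refine prod_congr rfl fun s _ => ?_
  exact (apply_card_orderEmbOfFin G X (s.map e.toEmbedding) (card_map _)).trans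
    (by simp only [orderEmbOfFin_map])

variable (B : Finset (Fin n))

noncomputable def comapBlock (C : Finset (Fin n)) : Finset (Fin B.card) :=
  univ.filter fun j => B.orderEmbOfFin rfl j ∈ C

noncomputable def comapPart (π : Finset (Finset (Fin n))) : Finset (Finset (Fin B.card)) :=
  (π.filter (· ⊆ B)).image (comapBlock B)

lemma map_comapBlock {C : Finset (Fin n)} (hC : C ⊆ B) :
    (comapBlock B C).map (B.orderEmbOfFin rfl).toEmbedding = C := by
  ext x
  simp only [comapBlock, mem_map, mem_filter, mem_univ, true_and, RelEmbedding.coe_toEmbedding]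
  refine ⟨fun ⟨j, hj, hjx⟩ => hjx ▸ hj, fun hx => ?_⟩
  obtain ⟨j, rfl⟩ : x ∈ Set.range (B.orderEmbOfFin rfl) := by simpa using hC hx
  exact ⟨j, hx, rfl⟩

lemma comapBlock_map (s : Finset (Fin B.card)) :
    comapBlock B (s.map (B.orderEmbOfFin rfl).toEmbedding) = s := by
  ext j
  simp [comapBlock]

lemma Finset.map_orderEmbOfFin_subset (s : Finset (Fin B.card)) :
    s.map (B.orderEmbOfFin rfl).toEmbedding ⊆ B := by
  intro x hx
  obtain ⟨j, -, rfl⟩ := mem_map.1 hx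
  exact orderEmbOfFin_mem B rfl j

end Transport

section Glue

variable {n : ℕ}

lemma IsNC.eq_of_mem {γ : Finset (Finset (Fin n))} (hγ : IsNC n γ) {B B' : Finset (Fin n)}
    (hB : B ∈ γ) (hB' : B' ∈ γ) {x : Fin n} (hx : x ∈ B) (hx' : x ∈ B') : B = B' := by
  by_contra hne
  exact disjoint_left.1 (hγ.2 B hB B' hB' hne) hx hx'

noncomputable def glue (γ : Finset (Finset (Fin n)))
    (p : ∀ B ∈ γ, Finset (Finset (Fin B.card))) : Finset (Finset (Fin n)) :=
  γ.attach.biUnion fun B => mapPart (B.1.orderEmbOfFin rfl) (p B.1 B.2)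

variable {γ : Finset (Finset (Fin n))} {p : ∀ B ∈ γ, Finset (Finset (Fin B.card))}

lemma mem_glue {C : Finset (Fin n)} :
    C ∈ glue γ p ↔
      ∃ B, ∃ hB : B ∈ γ, ∃ s ∈ p B hB, s.map (B.orderEmbOfFin rfl).toEmbedding = C := by
  simp only [glue, mem_biUnion, mem_attach, true_and, Subtype.exists, mem_mapPart]

lemma map_mem_glue {B : Finset (Fin n)} (hB : B ∈ γ) {s : Finset (Fin B.card)}
    (hs : s ∈ p B hB) : s.map (B.orderEmbOfFin rfl).toEmbedding ∈ glue γ p :=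
  mem_glue.2 ⟨B, hB, s, hs, rfl⟩

section IsNCL

variable (hγ : IsNC n γ) (hp : ∀ B hB, IsNCL B.card (p B hB))
include hγ hp

lemma isNCL_glue : IsNCL n (glue γ p) := by
  refine isNCL_iff.2 ⟨?_, fun x => ?_, ?_⟩
  · rintro _ hC
    obtain ⟨B, hB, s, hs, rfl⟩ := mem_glue.1 hC
    exact ((hp B hB).1 s hs).map
  · obtain ⟨B, hB, hxB⟩ := hγ.1.2.1 x
    obtain ⟨j, rfl⟩ : x ∈ Set.range (B.orderEmbOfFin rfl) := by simpa using hxB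
    obtain ⟨s, hs, hjs⟩ := (hp B hB).2.1 j
    exact ⟨_, map_mem_glue hB hs, mem_map_of_mem _ hjs⟩
  · rintro _ hC₁ _ hC₂ hne
    obtain ⟨B₁, hB₁, s₁, hs₁, rfl⟩ := mem_glue.1 hC₁
    obtain ⟨B₂, hB₂, s₂, hs₂, rfl⟩ := mem_glue.1 hC₂
    by_cases hB : B₁ = B₂
    · subst hB
      rw [nclCompatible_map_iff]
      exact (isNCL_iff.1 (hp B₁ hB₁)).2.2 s₁ hs₁ s₂ hs₂ fun h => hne (h ▸ rfl)
    · have h₁ := map_orderEmbOfFin_subset B₁ s₁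
      have h₂ := map_orderEmbOfFin_subset B₂ s₂
      exact nclCompatible_of_disjoint ((hγ.2 B₁ hB₁ B₂ hB₂ hB).mono h₁ h₂)
        fun h => hγ.1.2.2.1 B₁ hB₁ B₂ hB₂ hB (h.mono h₁ h₂)

lemma filter_glue_subset_eq {B : Finset (Fin n)} (hB : B ∈ γ) :
    (glue γ p).filter (· ⊆ B) = mapPart (B.orderEmbOfFin rfl) (p B hB) := by
  ext C
  rw [mem_filter, mem_mapPart]
  constructor
  · rintro ⟨hC, hCB⟩
    obtain ⟨B', hB', s, hs, rfl⟩ := mem_glue.1 hC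
    obtain ⟨x, hx⟩ := ((hp B' hB').1 s hs).map (f := (B'.orderEmbOfFin rfl).toEmbedding)
    obtain rfl := hγ.eq_of_mem hB' hB (map_orderEmbOfFin_subset B' s hx) (hCB hx)
    exact ⟨s, hs, rfl⟩
  · rintro ⟨s, hs, rfl⟩
    exact ⟨map_mem_glue hB hs, map_orderEmbOfFin_subset B s⟩

lemma comapPart_glue {B : Finset (Fin n)} (hB : B ∈ γ) : comapPart B (glue γ p) = p B hB := by
  rw [comapPart, filter_glue_subset_eq hγ hp hB, mapPart, map_eq_image, image_image]
  simp [Function.comp_def, comapBlock_map]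

end IsNCL

lemma component_glue (hγ : IsNC n γ) (hconn : ∀ B hB, cPart B.card (p B hB) = {univ})
    {B : Finset (Fin n)} (hB : B ∈ γ) {b : Fin n} (hb : b ∈ B) :
    component (glue γ p) b = B := by
  refine Subset.antisymm (fun w hw => ?_) fun w hw => ?_
  · induction mem_component.1 hw with
    | refl => exact hb
    | @tail x w _ hxw ih =>
      obtain ⟨C, hC, hxC, hwC⟩ := hxw
      obtain ⟨B', hB', s, hs, rfl⟩ := mem_glue.1 hC
      obtain rfl :=
        hγ.eq_of_mem hB' hB (map_orderEmbOfFin_subset B' s hxC) (ih (mem_component.2 ‹_›))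
      exact map_orderEmbOfFin_subset B' s hwC
  · have : NeZero B.card := ⟨(card_pos.2 ⟨b, hb⟩).ne'⟩
    obtain ⟨i, rfl⟩ : b ∈ Set.range (B.orderEmbOfFin rfl) := by simpa using hb
    obtain ⟨j, rfl⟩ : w ∈ Set.range (B.orderEmbOfFin rfl) := by simpa using hw
    refine mem_component.2 (Relation.ReflTransGen.lift _ (fun a c ⟨s, hs, ha, hc⟩ => ?_) i j
      (cPart_eq_singleton_univ_iff.1 (hconn B hB) i j))
    exact ⟨_, map_mem_glue hB hs, mem_map_of_mem _ ha, mem_map_of_mem _ hc⟩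

lemma cPart_glue (hγ : IsNC n γ) (hconn : ∀ B hB, cPart B.card (p B hB) = {univ}) :
    cPart n (glue γ p) = γ := by
  ext E
  rw [mem_cPart]
  constructor
  · rintro ⟨i, rfl⟩
    obtain ⟨B, hB, hiB⟩ := hγ.1.2.1 i
    rwa [component_glue hγ hconn hB hiB]
  · intro hE
    obtain ⟨b, hb⟩ := hγ.1.1 E hE
    exact ⟨b, component_glue hγ hconn hE hb⟩

end Glue

section Comap

variable {n : ℕ} {π : Finset (Finset (Fin n))} {B : Finset (Fin n)}

lemma mem_of_mem_cPart_of_connected (hB : B ∈ cPart n π) {x y : Fin n} (hx : x ∈ B)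
    (h : Connected π x y) : y ∈ B := by
  obtain ⟨i, rfl⟩ := mem_cPart.1 hB
  rw [← component_eq_of_mem hx]
  exact mem_component.2 h

lemma connected_comapPart (hB : B ∈ cPart n π) {i j : Fin B.card}
    (h : Connected π (B.orderEmbOfFin rfl i) (B.orderEmbOfFin rfl j)) :
    Connected (comapPart B π) i j := by
  generalize hy : B.orderEmbOfFin rfl j = y at h
  induction h generalizing j with
  | refl => exact (B.orderEmbOfFin rfl).injective hy ▸ .refl
  | @tail z y hxz hzy ih =>
    obtain ⟨C, hC, hzC, hyC⟩ := hzy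
    have hzB := mem_of_mem_cPart_of_connected hB (orderEmbOfFin_mem B rfl i) hxz
    obtain ⟨k, rfl⟩ : z ∈ Set.range (B.orderEmbOfFin rfl) := by simpa using hzB
    refine .tail (ih rfl) ⟨comapBlock B C, ?_, by simpa [comapBlock], by simpa [comapBlock, hy]⟩
    exact mem_image_of_mem _ (mem_filter.2 ⟨hC, subset_of_mem_cPart hB hC hzC hzB⟩)

lemma IsNCL.isNCL_comapPart (hπ : IsNCL n π) (hB : B ∈ cPart n π) :
    IsNCL B.card (comapPart B π) := by
  refine isNCL_iff.2 ⟨?_, fun j => ?_, ?_⟩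
  · rintro _ hs
    obtain ⟨C, hC, rfl⟩ := mem_image.1 hs
    rw [mem_filter] at hC
    obtain ⟨c, hc⟩ := hπ.1 C hC.1
    obtain ⟨j, rfl⟩ : c ∈ Set.range (B.orderEmbOfFin rfl) := by simpa using hC.2 hc
    exact ⟨j, by simpa [comapBlock]⟩
  · obtain ⟨C, hC, hjC⟩ := hπ.2.1 (B.orderEmbOfFin rfl j)
    have hCB := subset_of_mem_cPart hB hC hjC (orderEmbOfFin_mem B rfl j)
    exact ⟨comapBlock B C, mem_image_of_mem _ (mem_filter.2 ⟨hC, hCB⟩),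
      by simpa [comapBlock]⟩
  · rintro _ hs₁ _ hs₂ hne
    obtain ⟨C₁, hC₁, rfl⟩ := mem_image.1 hs₁
    obtain ⟨C₂, hC₂, rfl⟩ := mem_image.1 hs₂
    rw [mem_filter] at hC₁ hC₂
    rw [← nclCompatible_map_iff (B.orderEmbOfFin rfl), map_comapBlock B hC₁.2,
      map_comapBlock B hC₂.2]
    exact (isNCL_iff.1 hπ).2.2 C₁ hC₁.1 C₂ hC₂.1 fun h => hne (h ▸ rfl)

lemma cPart_comapPart (hB : B ∈ cPart n π) : cPart B.card (comapPart B π) = {univ} := by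
  obtain ⟨b, rfl⟩ := mem_cPart.1 hB
  have : NeZero (component π b).card := ⟨(card_pos.2 ⟨b, mem_component_self b⟩).ne'⟩
  refine cPart_eq_singleton_univ_iff.2 fun i j => connected_comapPart hB ?_
  exact (mem_component.1 (orderEmbOfFin_mem _ rfl i)).symm.trans
    (mem_component.1 (orderEmbOfFin_mem _ rfl j))

lemma IsNCL.glue_comapPart (hπ : IsNCL n π) :
    glue (cPart n π) (fun B _ => comapPart B π) = π := by
  ext C
  rw [mem_glue]
  constructor
  · rintro ⟨B, -, s, hs, rfl⟩
    obtain ⟨C, hC, rfl⟩ := mem_image.1 hs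
    rw [mem_filter] at hC
    rw [map_comapBlock B hC.2]
    exact hC.1
  · intro hC
    obtain ⟨c, hc⟩ := hπ.1 C hC
    have hCB := subset_component hC hc
    exact ⟨component π c, component_mem_cPart c, comapBlock _ C,
      mem_image_of_mem _ (mem_filter.2 ⟨hC, hCB⟩), map_comapBlock _ hCB⟩

end Comap

section Multiplicativity

variable {n : ℕ} {A : Type*} [Ring A]

/-- The set `s(π)` in `tTerm`. -/
noncomputable def nonMinSet (π : Finset (Finset (Fin n))) : Finset (Fin n) :=
  univ.filter fun k => ∀ B ∈ π, B.min ≠ (k : WithBot (Fin n))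

lemma tTerm_eq (t : ∀ m : ℕ, (Fin m → A) → ℂ) (π : Finset (Finset (Fin n)))
    (X : Fin n → A) :
    tTerm t n π X = (∏ B ∈ π, t B.card fun j => X (B.orderEmbOfFin rfl j)) *
      ∏ k ∈ nonMinSet π, t 1 fun _ => X k :=
  rfl

variable {γ : Finset (Finset (Fin n))} {p : ∀ B ∈ γ, Finset (Finset (Fin B.card))}
  (hγ : IsNC n γ)
include hγ

lemma nonMinSet_glue : nonMinSet (glue γ p) =
    γ.attach.biUnion fun B => (nonMinSet (p B.1 B.2)).map (B.1.orderEmbOfFin rfl).toEmbedding := by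
  ext k
  simp only [nonMinSet, mem_filter, mem_univ, true_and, mem_biUnion, mem_attach, mem_map,
    Subtype.exists, RelEmbedding.coe_toEmbedding]
  constructor
  · intro hk
    obtain ⟨B, hB, hkB⟩ := hγ.1.2.1 k
    obtain ⟨j, rfl⟩ : k ∈ Set.range (B.orderEmbOfFin rfl) := by simpa using hkB
    refine ⟨B, hB, j, fun s hs hmin => hk _ (map_mem_glue hB hs) ?_, rfl⟩
    rwa [min_map_eq_coe_iff]
  · rintro ⟨B, hB, j, hj, rfl⟩ C hC hmin
    obtain ⟨B', hB', s, hs, rfl⟩ := mem_glue.1 hC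
    obtain rfl := hγ.eq_of_mem hB' hB (map_orderEmbOfFin_subset B' s (mem_of_min hmin))
      (orderEmbOfFin_mem B rfl j)
    exact hj s hs ((min_map_eq_coe_iff _).1 hmin)

lemma tTerm_glue (hp : ∀ B hB, IsNCL B.card (p B hB)) (t : ∀ m : ℕ, (Fin m → A) → ℂ)
    (X : Fin n → A) :
    tTerm t n (glue γ p) X =
      ∏ B ∈ γ.attach, tTerm t B.1.card (p B.1 B.2) fun j => X (B.1.orderEmbOfFin rfl j) := by
  have hdisj : ∀ B ∈ γ.attach, ∀ B' ∈ γ.attach, B ≠ B' → ∀ x ∈ B.1, x ∉ B'.1 :=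
    fun B _ B' _ hne x hx hx' => hne (Subtype.ext (hγ.eq_of_mem B.2 B'.2 hx hx'))
  simp only [tTerm_eq, prod_mul_distrib]
  congr 1
  · rw [glue, prod_biUnion]
    · exact prod_congr rfl fun B _ => prod_mapPart t _ _ X
    · intro B hB B' hB' hne
      refine disjoint_left.2 fun C hC hC' => ?_
      obtain ⟨s, hs, rfl⟩ := mem_mapPart.1 hC
      obtain ⟨s', -, hs'⟩ := mem_mapPart.1 hC'
      obtain ⟨x, hx⟩ := ((hp B.1 B.2).1 s hs).map (f := (B.1.orderEmbOfFin rfl).toEmbedding)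
      exact hdisj B hB B' hB' hne x (map_orderEmbOfFin_subset _ s hx)
        (map_orderEmbOfFin_subset _ s' (by rwa [hs']))
  · rw [nonMinSet_glue hγ, prod_biUnion]
    · exact prod_congr rfl fun B _ => prod_map _ _ _
    · intro B hB B' hB' hne
      exact disjoint_left.2 fun x hx hx' =>
        hdisj B hB B' hB' hne x (map_orderEmbOfFin_subset _ _ hx) (map_orderEmbOfFin_subset _ _ hx')

end Multiplicativity

section MomentCumulant

variable {A : Type*} [Ring A]

noncomputable def connectedNCL (m : ℕ) : Finset (Finset (Finset (Fin m))) :=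
  univ.filter fun σ => IsNCL m σ ∧ cPart m σ = {univ}

noncomputable def connectedSum (t : ∀ m : ℕ, (Fin m → A) → ℂ) (m : ℕ)
    (Y : Fin m → A) : ℂ :=
  ∑ σ ∈ connectedNCL m, tTerm t m σ Y

lemma sum_tTerm_cPart_eq_cumTerm (t : ∀ m : ℕ, (Fin m → A) → ℂ) {n : ℕ}
    {γ : Finset (Finset (Fin n))} (hγ : IsNC n γ) (X : Fin n → A) :
    ∑ π ∈ univ.filter (fun π => IsNCL n π ∧ cPart n π = γ), tTerm t n π X =
      cumTerm (connectedSum t) n γ X := by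
  simp only [cumTerm, coe_orderIsoOfFin_apply, connectedSum]
  rw [prod_sum]
  refine sum_nbij' (fun π B _ => comapPart B π) (glue γ) ?_ ?_ ?_ ?_ ?_
  · intro π hmem
    obtain ⟨hπ, rfl⟩ := (mem_filter.1 hmem).2
    exact mem_pi.2 fun B hB => mem_filter.2
      ⟨mem_univ _, hπ.isNCL_comapPart hB, cPart_comapPart hB⟩
  · intro p hp
    have hp' : ∀ B hB, p B hB ∈ connectedNCL B.card := mem_pi.1 hp
    exact mem_filter.2 ⟨mem_univ _, isNCL_glue hγ fun B hB => (mem_filter.1 (hp' B hB)).2.1,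
      cPart_glue hγ fun B hB => (mem_filter.1 (hp' B hB)).2.2⟩
  · intro π hmem
    obtain ⟨hπ, rfl⟩ := (mem_filter.1 hmem).2
    exact hπ.glue_comapPart
  · intro p hp
    funext B hB
    exact comapPart_glue hγ (fun B hB => (mem_filter.1 (mem_pi.1 hp B hB)).2.1) hB
  · intro π hmem
    obtain ⟨hπ, rfl⟩ := (mem_filter.1 hmem).2
    conv_lhs => rw [← hπ.glue_comapPart]
    exact tTerm_glue hγ (fun B hB => hπ.isNCL_comapPart hB) t X

lemma sum_tTerm_eq_sum_cumTerm_connectedSum (t : ∀ m : ℕ, (Fin m → A) → ℂ) (n : ℕ)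
    (X : Fin n → A) :
    ∑ π ∈ univ.filter (fun π => IsNCL n π), tTerm t n π X =
      ∑ γ ∈ univ.filter (fun γ => IsNC n γ), cumTerm (connectedSum t) n γ X := by
  rw [← sum_fiberwise_of_maps_to (g := cPart n)
    fun π hπ => mem_filter.2 ⟨mem_univ _, (mem_filter.1 hπ).2.isNC_cPart⟩]
  refine sum_congr rfl fun γ hγ => ?_
  rw [filter_filter]
  exact sum_tTerm_cPart_eq_cumTerm t (mem_filter.1 hγ).2 X

lemma TRec.cumRec_connectedSum [Algebra ℂ A] {φ : A →ₗ[ℂ] ℂ}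
    {t : ∀ m : ℕ, (Fin m → A) → ℂ} (ht : TRec φ t) : CumRec φ (connectedSum t) :=
  fun n X => (ht n X).trans (sum_tTerm_eq_sum_cumTerm_connectedSum t (n + 1) X)

lemma isNC_singleton_univ (n : ℕ) [NeZero n] : IsNC n {(univ : Finset (Fin n))} := by
  refine ⟨isNCL_iff.2 ⟨?_, fun x => ⟨univ, mem_singleton_self _, mem_univ x⟩, ?_⟩, ?_⟩
  · simp
  all_goals
    intro B hB C hC hne
    rw [mem_singleton] at hB hC
    exact absurd (hB.trans hC.symm) hne

lemma IsNC.card_lt_of_ne_singleton_univ {n : ℕ} {γ : Finset (Finset (Fin n))} (hγ : IsNC n γ)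
    (hne : γ ≠ {univ}) {B : Finset (Fin n)} (hB : B ∈ γ) : B.card < n := by
  have hBne : B ≠ univ := by
    rintro rfl
    refine hne (eq_singleton_iff_unique_mem.2 ⟨hB, fun C hC => ?_⟩)
    obtain ⟨c, hc⟩ := hγ.1.1 C hC
    exact hγ.eq_of_mem hC hB hc (mem_univ c)
  simpa using card_lt_card (ssubset_univ_iff.2 hBne)

lemma cumTerm_singleton_univ (κ : ∀ m : ℕ, (Fin m → A) → ℂ) (n : ℕ) (X : Fin n → A) :
    cumTerm κ n {univ} X = κ n X := by
  simp only [cumTerm, prod_singleton, coe_orderIsoOfFin_apply]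
  refine (apply_card_orderEmbOfFin κ X univ (card_fin n)).trans ?_
  rw [← orderEmbOfFin_unique (card_fin n) (fun _ => mem_univ _) strictMono_id]
  rfl

theorem CumRec.unique [Algebra ℂ A] {φ : A →ₗ[ℂ] ℂ}
    {κ κ' : ∀ m : ℕ, (Fin m → A) → ℂ} (hκ : CumRec φ κ) (hκ' : CumRec φ κ') (n : ℕ)
    (X : Fin (n + 1) → A) :
    κ (n + 1) X = κ' (n + 1) X := by
  induction n using Nat.strong_induction_on with
  | _ n ih =>
    have hsum := (hκ n X).symm.trans (hκ' n X)
    have hmem : {univ} ∈ univ.filter fun γ => IsNC (n + 1) γ :=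
      mem_filter.2 ⟨mem_univ _, isNC_singleton_univ (n + 1)⟩
    rw [← add_sum_erase _ _ hmem, ← add_sum_erase _ _ hmem, cumTerm_singleton_univ,
      cumTerm_singleton_univ, sum_congr rfl ?_] at hsum
    · exact add_right_cancel hsum
    · intro γ hγ
      obtain ⟨hne, hγ⟩ := mem_erase.1 hγ
      replace hγ := (mem_filter.1 hγ).2
      refine prod_congr rfl fun B hB => ?_
      obtain ⟨k, hk⟩ := Nat.exists_eq_succ_of_ne_zero (card_pos.2 (hγ.1.1 B hB)).ne'
      have hkn : k < n := by have := hγ.card_lt_of_ne_singleton_univ hne hB; omega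
      simp only [coe_orderIsoOfFin_apply]
      rw [apply_card_orderEmbOfFin κ X B hk, apply_card_orderEmbOfFin κ' X B hk]
      exact ih k hkn _

end MomentCumulant

/-- For all `n ≥ 1`, the free cumulant satisfies
`κ_n(X_1, …, X_n) = Σ_{π ∈ [1_n]} t_π[X_1, …, X_n]`, the sum over all connected
non-crossing linked partitions of `{1, …, n}`. -/
theorem cumulant_eq_sum_connected_tTerm (A : Type*) [Ring A] [Algebra ℂ A]
    (φ : A →ₗ[ℂ] ℂ) (hφ1 : φ 1 = 1)
    (t κ : ∀ m : ℕ, (Fin m → A) → ℂ) (ht : TRec φ t) (hκ : CumRec φ κ) :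
    ∀ (n : ℕ) (X : Fin (n + 1) → A), (∀ i, i ≠ 0 → φ (X i) ≠ 0) →
      κ (n + 1) X =
        ∑ π ∈ Finset.univ.filter (fun π => IsNCL (n + 1) π ∧
            cPart (n + 1) π = {(Finset.univ : Finset (Fin (n + 1)))}),
          tTerm t (n + 1) π X :=
  fun n X _ => hκ.unique ht.cumRec_connectedSum n X
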